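/- arXiv:2101.12528 — 2 statements merged into one kernel-verified Lean document; each statement's English description precedes it below -/
import Mathlib

section
/- Let $0 < \alpha < 2 < \beta$, $b > 0$, and $c > 0$. Define $h(t) = \tfrac12 t^2 - c\, t^{\alpha} - \tfrac{b}{\beta} t^{\beta}$ for $t > 0$. If $c < \varphi(\bar t)$ where $\varphi(t) = \tfrac12 t^{2-\alpha} - \tfrac{b}{\beta} t^{\beta-\alpha}$ and $\bar t$ is its maximum point, then there exist $0 < R_0 < R_1$ with $h(R_0) = h(R_1) = 0$ and $h(t) > 0$ if and only if $t \in (R_0, R_1)$. -/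
open Real Set

/-- For `0 < α < 2 < β`, `b, c > 0`, set
`h(t) = t²/2 - c t^α - (b/β) t^β` and `φ(t) = t^(2-α)/2 - (b/β) t^(β-α)` with maximum
point `t̄ = ((2-α)β/(2(β-α)b))^(1/(β-2))`. If `c < φ(t̄)`, then there exist
`0 < R₀ < R₁` with `h(R₀) = h(R₁) = 0`, and for `t > 0`, `h(t) > 0 ↔ t ∈ (R₀, R₁)`. -/
theorem stmt_3 (α β b c : ℝ) (hα : 0 < α) (hα2 : α < 2) (hβ : 2 < β) (hb : 0 < b)
    (hc : 0 < c)
    (hsmall : c < (1 / 2) * (((2 - α) * β / (2 * (β - α) * b)) ^ (1 / (β - 2))) ^ (2 - α)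
      - (b / β) * (((2 - α) * β / (2 * (β - α) * b)) ^ (1 / (β - 2))) ^ (β - α)) :
    ∃ R₀ R₁ : ℝ, 0 < R₀ ∧ R₀ < R₁ ∧
      ((1 : ℝ) / 2) * R₀ ^ (2 : ℝ) - c * R₀ ^ α - (b / β) * R₀ ^ β = 0 ∧
      ((1 : ℝ) / 2) * R₁ ^ (2 : ℝ) - c * R₁ ^ α - (b / β) * R₁ ^ β = 0 ∧
      ∀ t : ℝ, 0 < t →
        (0 < (1 / 2) * t ^ (2 : ℝ) - c * t ^ α - (b / β) * t ^ β ↔ R₀ < t ∧ t < R₁) := by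
  have hp : (0:ℝ) < 2 - α := by linarith
  have hq : (0:ℝ) < β - α := by linarith
  have hβ2 : (0:ℝ) < β - 2 := by linarith
  have hβ0 : (0:ℝ) < β := by linarith
  have hβ2ne : β - 2 ≠ 0 := ne_of_gt hβ2
  set p : ℝ := 2 - α with hp_def
  set q : ℝ := β - α with hq_def
  set K : ℝ := p * β / (2 * q * b) with hK_def
  have hK : 0 < K := by positivity
  set tb : ℝ := K ^ (1 / (β - 2)) with htb_def
  have htb : 0 < tb := rpow_pos_of_pos hK _
  set φ : ℝ → ℝ := fun t => (1/2) * t ^ p - (b/β) * t ^ q with hφ_def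
  have hφtb : c < φ tb := hsmall
  have hcont1 : ∀ r : ℝ, 0 < r → Continuous (fun t : ℝ => t ^ r) := fun r hr =>
    continuous_iff_continuousAt.2 fun x => Real.continuousAt_rpow_const x r (Or.inr hr.le)
  have hcont : Continuous φ :=
    ((continuous_const.mul (hcont1 p hp)).sub (continuous_const.mul (hcont1 q hq)))
  have hderiv : ∀ t : ℝ, t ≠ 0 →
      HasDerivAt φ ((1/2) * (p * t ^ (p-1)) - (b/β) * (q * t ^ (q-1))) t := fun t ht =>
    ((Real.hasDerivAt_rpow_const (Or.inl ht)).const_mul (1/2)).sub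
      ((Real.hasDerivAt_rpow_const (Or.inl ht)).const_mul (b/β))
  have htbK : tb ^ (β - 2) = K := by
    rw [htb_def, ← Real.rpow_mul hK.le, one_div, inv_mul_cancel₀ hβ2ne, Real.rpow_one]
  -- derivative sign rewriting
  have hdform : ∀ t : ℝ, 0 < t →
      (1/2) * (p * t ^ (p-1)) - (b/β) * (q * t ^ (q-1))
        = t ^ (p-1) * ((1/2) * p - (b/β) * q * t ^ (β-2)) := by
    intro t ht
    have : t ^ (q-1) = t ^ (p-1) * t ^ (β-2) := by
      rw [← Real.rpow_add ht]; congr 1; rw [hp_def, hq_def]; ring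
    rw [this]; ring
  have hKval : (b/β) * q * K = (1/2) * p := by
    rw [hK_def]; field_simp
  have hmono : StrictMonoOn φ (Icc 0 tb) := by
    apply strictMonoOn_of_deriv_pos (convex_Icc _ _) hcont.continuousOn
    intro t ht
    rw [interior_Icc] at ht
    rw [(hderiv t (ne_of_gt ht.1)).deriv, hdform t ht.1]
    have htK : t ^ (β - 2) < K := by
      rw [← htbK]; exact Real.rpow_lt_rpow ht.1.le ht.2 hβ2
    have h1 : (b/β) * q * t ^ (β-2) < (b/β) * q * K :=
      mul_lt_mul_of_pos_left htK (by positivity)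
    have h2 : (0:ℝ) < t ^ (p-1) := rpow_pos_of_pos ht.1 _
    nlinarith
  have hanti : StrictAntiOn φ (Ici tb) := by
    apply strictAntiOn_of_deriv_neg (convex_Ici _) hcont.continuousOn
    intro t ht
    rw [interior_Ici] at ht
    have ht0 : 0 < t := lt_trans htb ht
    rw [(hderiv t (ne_of_gt ht0)).deriv, hdform t ht0]
    have htK : K < t ^ (β - 2) := by
      rw [← htbK]; exact Real.rpow_lt_rpow htb.le ht hβ2
    have h1 : (b/β) * q * K < (b/β) * q * t ^ (β-2) :=
      mul_lt_mul_of_pos_left htK (by positivity)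
    have h2 : (0:ℝ) < t ^ (p-1) := rpow_pos_of_pos ht0 _
    nlinarith
  -- endpoint values
  have h0 : φ 0 = 0 := by
    simp [hφ_def, Real.zero_rpow (ne_of_gt hp), Real.zero_rpow (ne_of_gt hq)]
  -- a large point where φ < c
  set M : ℝ := (β / (2*b)) ^ (1 / (β - 2)) with hM_def
  have hM : 0 < M := rpow_pos_of_pos (by positivity) _
  have hMK : M ^ (β - 2) = β / (2*b) := by
    rw [hM_def, ← Real.rpow_mul (by positivity), one_div, inv_mul_cancel₀ hβ2ne,
      Real.rpow_one]
  set T : ℝ := max tb M + 1 with hT_def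
  have hTtb : tb < T := lt_of_le_of_lt (le_max_left _ _) (by rw [hT_def]; linarith)
  have hTM : M < T := lt_of_le_of_lt (le_max_right _ _) (by rw [hT_def]; linarith)
  have hT0 : 0 < T := lt_trans hM hTM
  have hφT : φ T < c := by
    have hTK : β / (2*b) < T ^ (β - 2) := by
      rw [← hMK]; exact Real.rpow_lt_rpow hM.le hTM hβ2
    have hq1 : T ^ q = T ^ p * T ^ (β - 2) := by
      rw [← Real.rpow_add hT0]; congr 1; rw [hp_def, hq_def]; ring
    have h2 : (0:ℝ) < T ^ p := rpow_pos_of_pos hT0 _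
    have h3 : (b/β) * (β / (2*b)) = 1/2 := by field_simp
    have h4 : (b/β) * T ^ (β-2) > 1/2 := by
      rw [← h3]; exact mul_lt_mul_of_pos_left hTK (by positivity)
    have : φ T < 0 := by
      rw [hφ_def]; simp only
      rw [hq1]
      nlinarith
    linarith
  -- IVT
  obtain ⟨R₀, hR₀mem, hR₀⟩ :=
    intermediate_value_Ioo htb.le hcont.continuousOn (by rw [h0]; exact ⟨hc, hφtb⟩)
  obtain ⟨R₁, hR₁mem, hR₁⟩ :=
    intermediate_value_Ioo' hTtb.le hcont.continuousOn ⟨hφT, hφtb⟩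
  have hR₀pos : 0 < R₀ := hR₀mem.1
  have hR₀tb : R₀ < tb := hR₀mem.2
  have hR₁tb : tb < R₁ := hR₁mem.1
  have hfact : ∀ t : ℝ, 0 < t →
      (1/2) * t ^ (2:ℝ) - c * t ^ α - (b/β) * t ^ β = t ^ α * (φ t - c) := by
    intro t ht
    have h2 : t ^ (2:ℝ) = t ^ α * t ^ p := by
      rw [← Real.rpow_add ht]; congr 1; rw [hp_def]; ring
    have hβe : t ^ β = t ^ α * t ^ q := by
      rw [← Real.rpow_add ht]; congr 1; rw [hq_def]; ring
    rw [h2, hβe, hφ_def]; ring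
  have key : ∀ t : ℝ, 0 < t → (c < φ t ↔ R₀ < t ∧ t < R₁) := by
    intro t ht
    constructor
    · intro hφt
      constructor
      · by_contra hle
        push_neg at hle
        have : φ t ≤ φ R₀ := hmono.monotoneOn ⟨ht.le, by linarith⟩ ⟨hR₀pos.le, hR₀tb.le⟩ hle
        rw [hR₀] at this; linarith
      · by_contra hle
        push_neg at hle
        have : φ t ≤ φ R₁ := hanti.antitoneOn (le_of_lt hR₁tb) (by
            exact le_trans hR₁tb.le hle) hle
        rw [hR₁] at this; linarith
    · rintro ⟨h1, h2⟩
      rcases le_or_gt t tb with hcase | hcase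
      · have := hmono ⟨hR₀pos.le, hR₀tb.le⟩ ⟨ht.le, hcase⟩ h1
        rw [hR₀] at this; exact this
      · have := hanti (le_of_lt hcase) (le_of_lt hR₁tb) h2
        rw [hR₁] at this; exact this
  refine ⟨R₀, R₁, hR₀pos, lt_trans hR₀tb hR₁tb, ?_, ?_, ?_⟩
  · rw [hfact R₀ hR₀pos, hR₀]; ring
  · rw [hfact R₁ (lt_trans htb hR₁tb), hR₁]; ring
  · intro t ht
    rw [hfact t ht, mul_pos_iff_of_pos_left (rpow_pos_of_pos ht α), sub_pos, key t ht]
end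

section
/- Suppose real numbers $K > 0$, $Q > 0$, $C > 0$ satisfy $K = \mu\gamma Q + C$, $2K = \mu q \gamma^2 Q + \beta C$, $K = \tfrac{\beta - q\gamma}{2 - q\gamma} C$, $C \leq S^{-\beta/2} K^{\beta/2}$, and $Q \leq G\, K^{q\gamma/2}$, where $\mu, S, G > 0$, $0 < q\gamma < 2 < \beta$. Then $\mu G \geq \tfrac{\beta - 2}{\gamma(\beta - q\gamma)} \Big[\tfrac{2 - q\gamma}{\beta - q\gamma} S^{\beta/2}\Big]^{(2-q\gamma)/(\beta - 2)}$. -/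
/-- inequality (3.7) from Lemma 3.2: if `K, Q, C > 0` satisfy the
Pohozaev-type identities and Gagliardo–Nirenberg / Sobolev bounds listed below, with
`μ, S, G > 0` and `0 < qγ < 2 < β`, then
`μ G ≥ (β-2)/(γ(β-qγ)) [((2-qγ)/(β-qγ)) S^(β/2)]^((2-qγ)/(β-2))`. -/
theorem stmt_16 (K Q C μ γ q β S G : ℝ)
    (hK : 0 < K) (hQ : 0 < Q) (hC : 0 < C)
    (hμ : 0 < μ) (hS : 0 < S) (hG : 0 < G)
    (hqγ0 : 0 < q * γ) (hqγ2 : q * γ < 2) (hβ : 2 < β) (hγ : 0 < γ)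
    (h1 : K = μ * γ * Q + C)
    (h2 : 2 * K = μ * q * γ ^ 2 * Q + β * C)
    (h3 : K = (β - q * γ) / (2 - q * γ) * C)
    (h4 : C ≤ S ^ (-(β / 2)) * K ^ (β / 2))
    (h5 : Q ≤ G * K ^ (q * γ / 2)) :
    (β - 2) / (γ * (β - q * γ)) *
      ((2 - q * γ) / (β - q * γ) * S ^ (β / 2)) ^ ((2 - q * γ) / (β - 2)) ≤ μ * G := by
  have hc2 : 0 < 2 - q * γ := by linarith
  have hcβ : 0 < β - q * γ := by linarith
  have hβ2 : 0 < β - 2 := by linarith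
  have hSpow : 0 < S ^ (β / 2) := Real.rpow_pos_of_pos hS _
  set A := (2 - q * γ) / (β - q * γ) * S ^ (β / 2) with hA
  have hApos : 0 < A := by positivity
  -- key identity from h1, h2
  have hid : (β - 2) * K = μ * γ * Q * (β - q * γ) := by linear_combination β * h1 - h2
  -- express C in terms of K
  have hC3 : C * (β - q * γ) = (2 - q * γ) * K := by
    rw [h3]; field_simp
  -- rewrite Sobolev bound
  have h4' : C * S ^ (β / 2) ≤ K ^ (β / 2) := by
    rw [Real.rpow_neg hS.le, inv_mul_eq_div, le_div_iff₀ hSpow] at h4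
    exact h4
  have hKsplit : K ^ (β / 2) = K ^ ((β - 2) / 2) * K := by
    have h := Real.rpow_add hK ((β - 2) / 2) 1
    rw [Real.rpow_one] at h
    rw [show β / 2 = (β - 2) / 2 + 1 by ring, h]
  have h8 : (2 - q * γ) * S ^ (β / 2) * K ≤ (β - q * γ) * K ^ ((β - 2) / 2) * K := by
    calc (2 - q * γ) * S ^ (β / 2) * K = (C * (β - q * γ)) * S ^ (β / 2) := by
          linear_combination (-(S ^ (β / 2))) * hC3
      _ ≤ (β - q * γ) * K ^ (β / 2) := by
          have := mul_le_mul_of_nonneg_left h4' hcβ.le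
          linarith
      _ = (β - q * γ) * K ^ ((β - 2) / 2) * K := by rw [hKsplit]; ring
  have h9 : (2 - q * γ) * S ^ (β / 2) ≤ (β - q * γ) * K ^ ((β - 2) / 2) :=
    le_of_mul_le_mul_right h8 hK
  have hAK : A ≤ K ^ ((β - 2) / 2) := by
    rw [hA, div_mul_eq_mul_div, div_le_iff₀ hcβ]
    linarith
  have hpow : A ^ ((2 - q * γ) / (β - 2)) ≤ K ^ ((2 - q * γ) / 2) := by
    have h := Real.rpow_le_rpow hApos.le hAK
      (by positivity : (0:ℝ) ≤ (2 - q * γ) / (β - 2))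
    rw [← Real.rpow_mul hK.le] at h
    rw [show (β - 2) / 2 * ((2 - q * γ) / (β - 2)) = (2 - q * γ) / 2 by
      field_simp] at h
    exact h
  have hKq : 0 < K ^ (q * γ / 2) := Real.rpow_pos_of_pos hK _
  have h12 : (β - 2) * K ≤ μ * γ * G * K ^ (q * γ / 2) * (β - q * γ) := by
    have h5' := mul_le_mul_of_nonneg_left h5 (le_of_lt (mul_pos hμ hγ))
    have h5'' := mul_le_mul_of_nonneg_right h5' hcβ.le
    calc (β - 2) * K = μ * γ * Q * (β - q * γ) := hid
      _ ≤ μ * γ * (G * K ^ (q * γ / 2)) * (β - q * γ) := by linarith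
      _ = μ * γ * G * K ^ (q * γ / 2) * (β - q * γ) := by ring
  have h13 : (β - 2) * K ^ ((2 - q * γ) / 2) ≤ μ * γ * G * (β - q * γ) := by
    apply le_of_mul_le_mul_right _ hKq
    calc (β - 2) * K ^ ((2 - q * γ) / 2) * K ^ (q * γ / 2)
        = (β - 2) * K := by
          rw [mul_assoc, ← Real.rpow_add hK, show (2 - q * γ) / 2 + q * γ / 2 = 1 by ring,
            Real.rpow_one]
      _ ≤ μ * γ * G * K ^ (q * γ / 2) * (β - q * γ) := h12
      _ = μ * γ * G * (β - q * γ) * K ^ (q * γ / 2) := by ring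
  rw [div_mul_eq_mul_div, div_le_iff₀ (by positivity : 0 < γ * (β - q * γ))]
  have hstep := mul_le_mul_of_nonneg_left hpow hβ2.le
  linarith
end
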